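/- If B_n is a sequence of finite Blaschke products converging uniformly on 𝔻 to a nonconstant function f, and the valence of f is bounded by N on 𝔻, then the degrees of B_n are eventually bounded, and along a subsequence of constant degree d the limit f has constant valence d on 𝔻. -/

import Mathlib

open Complex Metric MeasureTheory Set Filter

noncomputable def blaschkeFactor (a z : ℂ) : ℂ := (z - a) / (1 - (starRingEnd ℂ) a * z)

def IsFiniteBlaschkeDeg (n : ℕ) (f : ℂ → ℂ) : Prop :=
  ∃ (lam : ℂ) (a : Fin n → ℂ), ‖lam‖ = 1 ∧ (∀ i, a i ∈ ball (0:ℂ) 1) ∧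
    ∀ z ∈ ball (0:ℂ) 1, f z = lam * ∏ i, blaschkeFactor (a i) z

def IsFiniteBlaschke (f : ℂ → ℂ) : Prop := ∃ n : ℕ, 0 < n ∧ IsFiniteBlaschkeDeg n f

noncomputable def zeroOrder (f : ℂ → ℂ) (z₀ : ℂ) : ℕ :=
  sInf {n : ℕ | ∃ g : ℂ → ℂ, AnalyticAt ℂ g z₀ ∧ g z₀ ≠ 0 ∧
    ∀ᶠ z in nhds z₀, f z = (z - z₀) ^ n * g z}

def HasValence (f : ℂ → ℂ) (U : Set ℂ) (w : ℂ) (n : ℕ) : Prop :=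
  ∃ hS : {z ∈ U | f z = w}.Finite, ∑ z ∈ hS.toFinset, zeroOrder (fun x => f x - w) z = n

/-!
Blaschke factors are unimodular on the unit circle, so a zero of a late `B n` close to the
circle would make `B n` small where a fixed `B K` is nearly unimodular, contradicting uniform
convergence. Hence zeros of the `B n` can only accumulate inside `𝔻`.

If `d n > N` frequently, pick `N + 1` zeros of each such `B n` and pass to a convergent
subsequence: the limits `cᵢ ∈ 𝔻` satisfy `‖f‖ ≤ ∏ᵢ ‖b_{cᵢ}‖`, so `f` vanishes to order at least
`#{i | cᵢ = p}` at each `p`, giving `f` at least `N + 1` zeros, against the valence bound at `0`.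
Along a subsequence of constant degree `d₀` the zeros and the unimodular constants converge,
so `f` is itself a Blaschke product of degree `d₀`. Finally `f - w` is a rational function whose
numerator has degree `d₀` and all its roots in `𝔻`, so every `w ∈ 𝔻` is taken `d₀` times.
-/

open Topology ComplexConjugate

section BlaschkeFactor

variable {a z : ℂ}

lemma norm_one_sub_conj_mul_sq_sub_norm_sub_sq (a z : ℂ) :
    ‖1 - conj a * z‖ ^ 2 - ‖z - a‖ ^ 2 = (1 - ‖z‖ ^ 2) * (1 - ‖a‖ ^ 2) := by
  simp only [← Complex.normSq_eq_norm_sq, Complex.normSq_apply, Complex.sub_re, Complex.sub_im,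
    Complex.mul_re, Complex.mul_im, Complex.conj_re, Complex.conj_im, Complex.one_re,
    Complex.one_im]
  ring

lemma one_sub_conj_mul_ne_zero (h : ‖a‖ * ‖z‖ < 1) : 1 - conj a * z ≠ 0 := by
  intro h0
  have h1 : ‖conj a * z‖ = 1 := by rw [← sub_eq_zero.mp h0, norm_one]
  rw [norm_mul, RCLike.norm_conj] at h1
  exact h.ne h1

lemma norm_sub_le_norm_one_sub_conj_mul (ha : ‖a‖ ≤ 1) (hz : ‖z‖ ≤ 1) :
    ‖z - a‖ ≤ ‖1 - conj a * z‖ := by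
  have key := norm_one_sub_conj_mul_sq_sub_norm_sub_sq a z
  have : 0 ≤ (1 - ‖z‖ ^ 2) * (1 - ‖a‖ ^ 2) :=
    mul_nonneg (by nlinarith [norm_nonneg z]) (by nlinarith [norm_nonneg a])
  exact le_of_pow_le_pow_left₀ two_ne_zero (norm_nonneg _) (by linarith)

lemma norm_one_sub_conj_mul_le_norm_sub (ha : ‖a‖ ≤ 1) (hz : 1 ≤ ‖z‖) :
    ‖1 - conj a * z‖ ≤ ‖z - a‖ := by
  have key := norm_one_sub_conj_mul_sq_sub_norm_sub_sq a z
  have : (1 - ‖z‖ ^ 2) * (1 - ‖a‖ ^ 2) ≤ 0 :=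
    mul_nonpos_of_nonpos_of_nonneg (by nlinarith) (by nlinarith [norm_nonneg a])
  exact le_of_pow_le_pow_left₀ two_ne_zero (norm_nonneg _) (by linarith)

@[simp]
lemma blaschkeFactor_self (a : ℂ) : blaschkeFactor a a = 0 := by
  simp [blaschkeFactor]

lemma prod_blaschkeFactor_eq_zero {m : ℕ} (c : Fin m → ℂ) (i : Fin m) :
    ∏ j, blaschkeFactor (c j) (c i) = 0 :=
  Finset.prod_eq_zero (Finset.mem_univ i) (blaschkeFactor_self _)

-- When `conj a * z = 1` the denominator vanishes and `blaschkeFactor a z = 0` by `x / 0 = 0`.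
lemma norm_blaschkeFactor_le_one (ha : ‖a‖ ≤ 1) (hz : ‖z‖ ≤ 1) : ‖blaschkeFactor a z‖ ≤ 1 := by
  rw [blaschkeFactor, norm_div]
  exact div_le_one_of_le₀ (norm_sub_le_norm_one_sub_conj_mul ha hz) (norm_nonneg _)

lemma norm_blaschkeFactor_eq_one (ha : ‖a‖ < 1) (hz : ‖z‖ = 1) : ‖blaschkeFactor a z‖ = 1 := by
  have hden : 1 - conj a * z ≠ 0 := one_sub_conj_mul_ne_zero (by rwa [hz, mul_one])
  have key := norm_one_sub_conj_mul_sq_sub_norm_sub_sq a z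
  rw [hz, one_pow, sub_self, zero_mul, sub_eq_zero] at key
  rw [blaschkeFactor, norm_div, div_eq_one_iff_eq (norm_ne_zero_iff.mpr hden)]
  exact ((pow_left_inj₀ (norm_nonneg _) (norm_nonneg _) two_ne_zero).mp key).symm

lemma norm_blaschkeFactor_le_div (ha : ‖a‖ < 1) (hz : ‖z‖ ≤ 1) :
    ‖blaschkeFactor a z‖ ≤ ‖z - a‖ / (1 - ‖a‖) := by
  have hden : 1 - ‖a‖ ≤ ‖1 - conj a * z‖ := calc
    1 - ‖a‖ ≤ ‖(1 : ℂ)‖ - ‖conj a * z‖ := by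
      rw [norm_one, norm_mul, RCLike.norm_conj]
      nlinarith [norm_nonneg a]
    _ ≤ ‖1 - conj a * z‖ := norm_sub_norm_le _ _
  rw [blaschkeFactor, norm_div]
  exact div_le_div_of_nonneg_left (norm_nonneg _) (by linarith) hden

lemma tendsto_blaschkeFactor {α : Type*} {l : Filter α} {a z : α → ℂ} {a₀ z₀ : ℂ}
    (ha : Tendsto a l (𝓝 a₀)) (hz : Tendsto z l (𝓝 z₀)) (h : ‖a₀‖ * ‖z₀‖ < 1) :
    Tendsto (fun x => blaschkeFactor (a x) (z x)) l (𝓝 (blaschkeFactor a₀ z₀)) :=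
  (hz.sub ha).div (tendsto_const_nhds.sub (((Complex.continuous_conj.tendsto a₀).comp ha).mul hz))
    (one_sub_conj_mul_ne_zero h)

lemma tendsto_prod_blaschkeFactor {α : Type*} {l : Filter α} {m : ℕ} {ζ : α → Fin m → ℂ}
    {c : Fin m → ℂ} (hζ : Tendsto ζ l (𝓝 c)) (hc : ∀ i, c i ∈ ball (0 : ℂ) 1) {z : ℂ}
    (hz : z ∈ ball (0 : ℂ) 1) :
    Tendsto (fun x => ∏ i, blaschkeFactor (ζ x i) z) l (𝓝 (∏ i, blaschkeFactor (c i) z)) :=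
  tendsto_finsetProd _ fun i _ => tendsto_blaschkeFactor (tendsto_pi_nhds.mp hζ i)
    tendsto_const_nhds (mul_lt_one_of_nonneg_of_lt_one_left (norm_nonneg _)
      (mem_ball_zero_iff.mp (hc i)) (mem_ball_zero_iff.mp hz).le)

end BlaschkeFactor

section FiniteBlaschke

variable {m : ℕ} {B : ℂ → ℂ}

lemma IsFiniteBlaschkeDeg.differentiableOn (hB : IsFiniteBlaschkeDeg m B) :
    DifferentiableOn ℂ B (ball 0 1) := by
  obtain ⟨lam, a, -, ha, hB⟩ := hB
  refine DifferentiableOn.congr ?_ hB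
  refine (DifferentiableOn.fun_finsetProd fun i _ => ?_).const_mul lam
  refine (differentiableOn_id.sub_const _).div (by fun_prop) fun z hz => ?_
  exact one_sub_conj_mul_ne_zero (mul_lt_one_of_nonneg_of_lt_one_left (norm_nonneg _)
    (mem_ball_zero_iff.mp (ha i)) (mem_ball_zero_iff.mp hz).le)

lemma IsFiniteBlaschkeDeg.exists_norm_le_prod {d : ℕ} (hB : IsFiniteBlaschkeDeg d B)
    (hm : m ≤ d) : ∃ ζ : Fin m → ℂ, (∀ i, ζ i ∈ ball (0 : ℂ) 1) ∧
      ∀ z ∈ ball (0 : ℂ) 1, ‖B z‖ ≤ ∏ i, ‖blaschkeFactor (ζ i) z‖ := by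
  obtain ⟨lam, a, hlam, ha, hB⟩ := hB
  refine ⟨fun i => a (Fin.castLE hm i), fun i => ha _, fun z hz => ?_⟩
  rw [hB z hz, norm_mul, hlam, one_mul, norm_prod]
  calc ∏ i, ‖blaschkeFactor (a i) z‖
      ≤ ∏ i ∈ Finset.univ.map (Fin.castLEEmb hm), ‖blaschkeFactor (a i) z‖ :=
        Finset.prod_le_prod_of_subset_of_le_one (Finset.subset_univ _)
          (fun _ _ => norm_nonneg _) fun i _ _ => norm_blaschkeFactor_le_one
            (mem_ball_zero_iff.mp (ha i)).le (mem_ball_zero_iff.mp hz).le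
    _ = _ := Finset.prod_map _ _ _

end FiniteBlaschke

section ZeroOrder

lemma zeroOrder_eq_analyticOrderNatAt {f : ℂ → ℂ} {z₀ : ℂ} (hf : AnalyticAt ℂ f z₀) :
    zeroOrder f z₀ = analyticOrderNatAt f z₀ := by
  have hset : {n : ℕ | ∃ g : ℂ → ℂ, AnalyticAt ℂ g z₀ ∧ g z₀ ≠ 0 ∧
      ∀ᶠ z in 𝓝 z₀, f z = (z - z₀) ^ n * g z} = {n : ℕ | analyticOrderAt f z₀ = n} := by
    ext n
    simp [hf.analyticOrderAt_eq_natCast]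
  rw [zeroOrder, hset, analyticOrderNatAt]
  cases analyticOrderAt f z₀ with
  | top => simp
  | coe k => simp

lemma zeroOrder_eq_of_eventually_eq_pow_mul {f g : ℂ → ℂ} {z₀ : ℂ} {n : ℕ}
    (hg : AnalyticAt ℂ g z₀) (hg₀ : g z₀ ≠ 0) (hfg : ∀ᶠ z in 𝓝 z₀, f z = (z - z₀) ^ n * g z) :
    zeroOrder f z₀ = n := by
  have hf : AnalyticAt ℂ f z₀ :=
    ((analyticAt_id.sub analyticAt_const).pow n |>.mul hg).congr (hfg.mono fun z hz => hz.symm)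
  rw [zeroOrder_eq_analyticOrderNatAt hf, analyticOrderNatAt,
    (hf.analyticOrderAt_eq_natCast).mpr ⟨g, hg, hg₀, by simpa using hfg⟩, ENat.toNat_natCast]

lemma le_zeroOrder_of_norm_le_mul_pow {f : ℂ → ℂ} {p : ℂ} (hf : AnalyticAt ℂ f p)
    (hf₀ : ¬ ∀ᶠ z in 𝓝 p, f z = 0) {C : ℝ} {m : ℕ}
    (hbd : ∀ᶠ z in 𝓝 p, ‖f z‖ ≤ C * ‖z - p‖ ^ m) : m ≤ zeroOrder f p := by
  rw [zeroOrder_eq_analyticOrderNatAt hf]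
  obtain ⟨g, hg, hg₀, hfg⟩ :=
    hf.analyticOrderAt_ne_top.mp fun h => hf₀ (analyticOrderAt_eq_top.mp h)
  set k := analyticOrderNatAt f p
  by_contra! hkm
  have hbound : ∀ᶠ z in 𝓝[≠] p, ‖g z‖ ≤ C * ‖z - p‖ ^ (m - k) := by
    filter_upwards [nhdsWithin_le_nhds (hbd.and hfg), self_mem_nhdsWithin]
      with z ⟨hbd, hfg⟩ (hz : z ≠ p)
    have hzp : 0 < ‖z - p‖ ^ k := pow_pos (norm_pos_iff.mpr (sub_ne_zero.mpr hz)) k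
    rw [hfg, smul_eq_mul, norm_mul, norm_pow, ← Nat.sub_add_cancel hkm.le, pow_add] at hbd
    nlinarith
  have hlim : Tendsto (fun z => C * ‖z - p‖ ^ (m - k)) (𝓝[≠] p) (𝓝 0) := by
    have : ContinuousAt (fun z => C * ‖z - p‖ ^ (m - k)) p := by fun_prop
    simpa [Nat.sub_ne_zero_of_lt hkm] using this.tendsto.mono_left nhdsWithin_le_nhds
  exact hg₀ (norm_le_zero_iff.mp (le_of_tendsto_of_tendsto
    (hg.continuousAt.norm.tendsto.mono_left nhdsWithin_le_nhds) hlim hbound))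

end ZeroOrder

section Valence

open Polynomial

lemma zeroOrder_eq_rootMultiplicity {F : ℂ → ℂ} {R Q : ℂ[X]} {z₀ : ℂ} (hR : R ≠ 0)
    (hQ : Q.eval z₀ ≠ 0) (hF : ∀ᶠ z in 𝓝 z₀, F z = R.eval z / Q.eval z) :
    zeroOrder F z₀ = R.rootMultiplicity z₀ := by
  set S := R /ₘ (X - C z₀) ^ R.rootMultiplicity z₀
  refine zeroOrder_eq_of_eventually_eq_pow_mul (g := fun z => S.eval z / Q.eval z)
    ((AnalyticOnNhd.eval_polynomial S z₀ trivial).div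
      (AnalyticOnNhd.eval_polynomial Q z₀ trivial) hQ)
    (div_ne_zero (eval_divByMonic_pow_rootMultiplicity_ne_zero z₀ hR) hQ) ?_
  filter_upwards [hF] with z hz
  rw [hz, mul_div_assoc']
  congr 1
  conv_lhs => rw [← R.pow_mul_divByMonic_rootMultiplicity_eq z₀]
  simp [S]

lemma hasValence_of_sub_eq_eval_div {f : ℂ → ℂ} {U : Set ℂ} (hU : IsOpen U) {w : ℂ}
    {R Q : ℂ[X]} (hR : R ≠ 0) (hroots : ∀ z ∈ R.roots, z ∈ U) (hQ : ∀ z ∈ U, Q.eval z ≠ 0)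
    (hf : ∀ z ∈ U, f z - w = R.eval z / Q.eval z) : HasValence f U w R.natDegree := by
  classical
  have hfiber : {z ∈ U | f z = w} = R.roots.toFinset := by
    ext z
    simp only [Set.mem_ofPred_eq, Finset.mem_coe, Multiset.mem_toFinset, mem_roots hR, IsRoot.def]
    constructor
    · rintro ⟨hz, hfz⟩
      have := hf z hz
      rw [hfz, sub_self, eq_comm, div_eq_zero_iff] at this
      exact this.resolve_right (hQ z hz)
    · intro hz
      have hzU := hroots z ((mem_roots hR).mpr hz)
      exact ⟨hzU, sub_eq_zero.mp (by rw [hf z hzU, hz, zero_div])⟩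
  have hfin : {z ∈ U | f z = w}.Finite := hfiber ▸ R.roots.toFinset.finite_toSet
  refine ⟨hfin, ?_⟩
  calc ∑ z ∈ hfin.toFinset, zeroOrder (fun x => f x - w) z
      = ∑ z ∈ R.roots.toFinset, R.rootMultiplicity z := by
        refine Finset.sum_congr (by simp [hfiber]) fun z hz => ?_
        have hzU := hroots z (Multiset.mem_toFinset.mp ((by simpa [hfiber] using hz)))
        exact zeroOrder_eq_rootMultiplicity hR (hQ z hzU)
          (Filter.mem_of_superset (hU.mem_nhds hzU) hf)
    _ = R.roots.card := by
        simp_rw [← count_roots]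
        exact Multiset.toFinset_sum_count_eq _
    _ = R.natDegree := IsAlgClosed.card_roots_eq_natDegree

variable {m : ℕ}

noncomputable def blaschkeNum (a : Fin m → ℂ) : ℂ[X] := ∏ i, (X - C (a i))

noncomputable def blaschkeDen (a : Fin m → ℂ) : ℂ[X] := ∏ i, (1 - C (conj (a i)) * X)

@[simp]
lemma eval_blaschkeNum (a : Fin m → ℂ) (z : ℂ) : (blaschkeNum a).eval z = ∏ i, (z - a i) := by
  simp [blaschkeNum, eval_prod]

@[simp]
lemma eval_blaschkeDen (a : Fin m → ℂ) (z : ℂ) :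
    (blaschkeDen a).eval z = ∏ i, (1 - conj (a i) * z) := by
  simp [blaschkeDen, eval_prod]

lemma prod_blaschkeFactor_eq_div (a : Fin m → ℂ) (z : ℂ) :
    ∏ i, blaschkeFactor (a i) z = (blaschkeNum a).eval z / (blaschkeDen a).eval z := by
  simp [blaschkeFactor, Finset.prod_div_distrib]

lemma monic_blaschkeNum (a : Fin m → ℂ) : (blaschkeNum a).Monic :=
  monic_prod_of_monic _ _ fun i _ => monic_X_sub_C (a i)

lemma natDegree_blaschkeNum (a : Fin m → ℂ) : (blaschkeNum a).natDegree = m := by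
  simp [blaschkeNum, natDegree_prod_of_monic _ _ fun i _ => monic_X_sub_C (a i)]

lemma natDegree_one_sub_C_mul_X_le (c : ℂ) : (1 - C c * X).natDegree ≤ 1 := by
  compute_degree

lemma natDegree_blaschkeDen_le (a : Fin m → ℂ) : (blaschkeDen a).natDegree ≤ m :=
  calc (blaschkeDen a).natDegree ≤ ∑ i, (1 - C (conj (a i)) * X : ℂ[X]).natDegree :=
        natDegree_prod_le _ _
    _ ≤ ∑ _i : Fin m, 1 := Finset.sum_le_sum fun i _ => natDegree_one_sub_C_mul_X_le _
    _ = m := by simp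

lemma coeff_blaschkeDen (a : Fin m → ℂ) : (blaschkeDen a).coeff m = ∏ i, -conj (a i) := by
  have h := coeff_prod_of_natDegree_le (s := Finset.univ)
    (fun i => (1 - C (conj (a i)) * X : ℂ[X])) 1 fun i _ => natDegree_one_sub_C_mul_X_le _
  simp only [Finset.card_univ, Fintype.card_fin, mul_one] at h
  simp [blaschkeDen, h, coeff_one]

noncomputable def blaschkeSubNum (lam w : ℂ) (a : Fin m → ℂ) : ℂ[X] :=
  C lam * blaschkeNum a - C w * blaschkeDen a

variable {lam w : ℂ} {a : Fin m → ℂ}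

lemma coeff_blaschkeSubNum_ne_zero (hlam : ‖lam‖ = 1) (hw : ‖w‖ < 1) (ha : ∀ i, ‖a i‖ ≤ 1) :
    (blaschkeSubNum lam w a).coeff m ≠ 0 := by
  have hlead := (monic_blaschkeNum a).coeff_natDegree
  rw [natDegree_blaschkeNum] at hlead
  rw [blaschkeSubNum, coeff_sub, coeff_C_mul, coeff_C_mul, hlead, coeff_blaschkeDen, mul_one,
    sub_ne_zero]
  intro h
  have : ‖w * ∏ i, -conj (a i)‖ < 1 := by
    rw [norm_mul, norm_prod]
    calc ‖w‖ * ∏ i, ‖-conj (a i)‖ ≤ ‖w‖ * 1 :=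
          mul_le_mul_of_nonneg_left (Finset.prod_le_one (fun _ _ => norm_nonneg _)
            fun i _ => by rw [norm_neg, RCLike.norm_conj]; exact ha i) (norm_nonneg _)
      _ < 1 := by rwa [mul_one]
  rw [← h, hlam] at this
  exact lt_irrefl _ this

lemma natDegree_blaschkeSubNum (hlam : ‖lam‖ = 1) (hw : ‖w‖ < 1) (ha : ∀ i, ‖a i‖ ≤ 1) :
    (blaschkeSubNum lam w a).natDegree = m :=
  natDegree_eq_of_le_of_coeff_ne_zero ((natDegree_sub_le _ _).trans
    (max_le ((natDegree_C_mul_le _ _).trans (natDegree_blaschkeNum a).le)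
      ((natDegree_C_mul_le _ _).trans (natDegree_blaschkeDen_le a))))
    (coeff_blaschkeSubNum_ne_zero hlam hw ha)

lemma norm_lt_one_of_isRoot_blaschkeSubNum (hlam : ‖lam‖ = 1) (hw : ‖w‖ < 1)
    (ha : ∀ i, ‖a i‖ < 1) {z : ℂ} (hz : (blaschkeSubNum lam w a).IsRoot z) : ‖z‖ < 1 := by
  by_contra! hz1
  have heq : lam * ∏ i, (z - a i) = w * ∏ i, (1 - conj (a i) * z) := by
    simpa [blaschkeSubNum, sub_eq_zero] using hz
  have hden : ‖∏ i, (1 - conj (a i) * z)‖ ≤ ‖∏ i, (z - a i)‖ := by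
    simp only [norm_prod]
    exact Finset.prod_le_prod (fun _ _ => norm_nonneg _)
      fun i _ => norm_one_sub_conj_mul_le_norm_sub (ha i).le hz1
  have hnum : ‖∏ i, (z - a i)‖ = ‖w‖ * ‖∏ i, (1 - conj (a i) * z)‖ := by
    rw [← norm_mul, ← heq, norm_mul, hlam, one_mul]
  have hzero : ∏ i, (z - a i) = 0 := norm_le_zero_iff.mp (by
    nlinarith [norm_nonneg (∏ i, (z - a i)), mul_le_mul_of_nonneg_left hden (norm_nonneg w)])
  obtain ⟨i, -, hi⟩ := Finset.prod_eq_zero_iff.mp hzero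
  rw [sub_eq_zero.mp hi] at hz1
  exact (ha i).not_ge hz1

lemma mul_prod_blaschkeFactor_sub_eq_div {z : ℂ} (hz : (blaschkeDen a).eval z ≠ 0) :
    lam * ∏ i, blaschkeFactor (a i) z - w =
      (blaschkeSubNum lam w a).eval z / (blaschkeDen a).eval z := by
  rw [prod_blaschkeFactor_eq_div, eq_div_iff hz, blaschkeSubNum]
  simp only [eval_sub, eval_mul, eval_C]
  rw [sub_mul, mul_assoc, div_mul_cancel₀ _ hz]

theorem IsFiniteBlaschkeDeg.hasValence {f : ℂ → ℂ} (hf : IsFiniteBlaschkeDeg m f)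
    (hw : w ∈ ball (0 : ℂ) 1) : HasValence f (ball 0 1) w m := by
  obtain ⟨lam, a, hlam, ha, hf⟩ := hf
  have ha' : ∀ i, ‖a i‖ < 1 := fun i => mem_ball_zero_iff.mp (ha i)
  have hw' : ‖w‖ < 1 := mem_ball_zero_iff.mp hw
  have hden : ∀ z ∈ ball (0 : ℂ) 1, (blaschkeDen a).eval z ≠ 0 := fun z hz => by
    rw [eval_blaschkeDen, Finset.prod_ne_zero_iff]
    exact fun i _ => one_sub_conj_mul_ne_zero (mul_lt_one_of_nonneg_of_lt_one_left
      (norm_nonneg _) (ha' i) (mem_ball_zero_iff.mp hz).le)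
  have hR : blaschkeSubNum lam w a ≠ 0 := fun h =>
    coeff_blaschkeSubNum_ne_zero hlam hw' (fun i => (ha' i).le) (by rw [h, coeff_zero])
  rw [← natDegree_blaschkeSubNum hlam hw' fun i => (ha' i).le]
  refine hasValence_of_sub_eq_eval_div isOpen_ball hR (fun z hz => mem_ball_zero_iff.mpr
    (norm_lt_one_of_isRoot_blaschkeSubNum hlam hw' ha' ((mem_roots hR).mp hz))) hden
    fun z hz => ?_
  rw [hf z hz, mul_prod_blaschkeFactor_sub_eq_div (hden z hz)]

end Valence

lemma TendstoUniformlyOn.comp_tendsto {ι κ α β : Type*} [UniformSpace β] {F : ι → α → β}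
    {f : α → β} {p : Filter ι} {s : Set α} (h : TendstoUniformlyOn F f p s) {q : Filter κ}
    {φ : κ → ι} (hφ : Tendsto φ q p) : TendstoUniformlyOn (fun k => F (φ k)) f q s :=
  fun u hu => hφ.eventually (h u hu)

section UniformLimit

variable {B : ℕ → ℂ → ℂ} {d : ℕ → ℕ} {f : ℂ → ℂ}

lemma analyticOnNhd_of_tendstoUniformlyOn (hB : ∀ n, IsFiniteBlaschkeDeg (d n) (B n))
    (hconv : TendstoUniformlyOn B f atTop (ball 0 1)) : AnalyticOnNhd ℂ f (ball 0 1) :=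
  (hconv.tendstoLocallyUniformlyOn.differentiableOn
    (.of_forall fun n => (hB n).differentiableOn) isOpen_ball).analyticOnNhd isOpen_ball

lemma norm_lt_one_of_tendsto_of_apply_eq_zero (hB : ∀ n, IsFiniteBlaschkeDeg (d n) (B n))
    (hcauchy : UniformCauchySeqOn B atTop (ball 0 1)) {n : ℕ → ℕ} (hn : Tendsto n atTop atTop)
    {z : ℕ → ℂ} (hz : ∀ k, z k ∈ ball (0 : ℂ) 1) (hzero : ∀ k, B (n k) (z k) = 0) {c : ℂ}
    (hc : Tendsto z atTop (𝓝 c)) : ‖c‖ < 1 := by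
  have hc1 : ‖c‖ ≤ 1 := le_of_tendsto hc.norm (.of_forall fun k => (mem_ball_zero_iff.mp (hz k)).le)
  refine hc1.lt_of_ne fun hc1 => ?_
  obtain ⟨K, hK⟩ := Metric.uniformCauchySeqOn_iff.mp hcauchy (1 / 2) one_half_pos
  obtain ⟨lam, a, hlam, ha, hBK⟩ := hB K
  have hsmall : ∀ᶠ k in atTop, ‖lam * ∏ i, blaschkeFactor (a i) (z k)‖ ≤ 1 / 2 := by
    filter_upwards [hn.eventually_ge_atTop K] with k hk
    have := hK K le_rfl (n k) hk (z k) (hz k)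
    rw [hzero, dist_zero_right, hBK _ (hz k)] at this
    exact this.le
  have hlim : Tendsto (fun k => lam * ∏ i, blaschkeFactor (a i) (z k)) atTop
      (𝓝 (lam * ∏ i, blaschkeFactor (a i) c)) :=
    tendsto_const_nhds.mul <| tendsto_finsetProd _ fun i _ => tendsto_blaschkeFactor
      tendsto_const_nhds hc (by rw [hc1, mul_one]; exact mem_ball_zero_iff.mp (ha i))
  have hunimodular : ‖lam * ∏ i, blaschkeFactor (a i) c‖ = 1 := by
    rw [norm_mul, hlam, one_mul, norm_prod]
    exact Finset.prod_eq_one fun i _ => norm_blaschkeFactor_eq_one (mem_ball_zero_iff.mp (ha i)) hc1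
  have := le_of_tendsto hlim.norm hsmall
  rw [hunimodular] at this
  norm_num at this

lemma exists_subseq_tendsto_of_apply_eq_zero (hB : ∀ n, IsFiniteBlaschkeDeg (d n) (B n))
    (hcauchy : UniformCauchySeqOn B atTop (ball 0 1)) {m : ℕ} {ζ : ℕ → Fin m → ℂ}
    (hζ : ∀ n i, ζ n i ∈ ball (0 : ℂ) 1) (hzero : ∀ n i, B n (ζ n i) = 0) :
    ∃ σ : ℕ → ℕ, ∃ c : Fin m → ℂ, StrictMono σ ∧ (∀ i, c i ∈ ball (0 : ℂ) 1) ∧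
      Tendsto (fun k => ζ (σ k)) atTop (𝓝 c) := by
  obtain ⟨c, -, σ, hσ, hlim⟩ :=
    (isCompact_univ_pi fun _ : Fin m => isCompact_closedBall (0 : ℂ) 1).tendsto_subseq
      fun n => Set.mem_univ_pi.mpr fun i => ball_subset_closedBall (hζ n i)
  refine ⟨σ, c, hσ, fun i => mem_ball_zero_iff.mpr ?_, hlim⟩
  exact norm_lt_one_of_tendsto_of_apply_eq_zero hB hcauchy hσ.tendsto_atTop (fun k => hζ _ i)
    (fun k => hzero _ i) (tendsto_pi_nhds.mp hlim i)

theorem IsFiniteBlaschkeDeg.of_tendstoUniformlyOn {m : ℕ}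
    (hB : ∀ n, IsFiniteBlaschkeDeg m (B n)) (hconv : TendstoUniformlyOn B f atTop (ball 0 1)) :
    IsFiniteBlaschkeDeg m f := by
  choose lam a hlam ha hBa using hB
  have hzero : ∀ n i, B n (a n i) = 0 := fun n i => by
    rw [hBa n _ (ha n i), prod_blaschkeFactor_eq_zero, mul_zero]
  obtain ⟨σ, c, hσ, hc, hac⟩ := exists_subseq_tendsto_of_apply_eq_zero
    (fun n => ⟨lam n, a n, hlam n, ha n, hBa n⟩) hconv.uniformCauchySeqOn ha hzero
  obtain ⟨lam₀, hlam₀, τ, hτ, hlamτ⟩ := (isCompact_sphere (0 : ℂ) 1).tendsto_subseq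
    (x := fun k => lam (σ k)) fun k => mem_sphere_zero_iff_norm.mpr (hlam _)
  refine ⟨lam₀, c, mem_sphere_zero_iff_norm.mp hlam₀, hc, fun z hz => ?_⟩
  have hBσ : Tendsto (fun k => B (σ (τ k)) z) atTop (𝓝 (f z)) :=
    (hconv.tendsto_at hz).comp (hσ.comp hτ).tendsto_atTop
  refine tendsto_nhds_unique hBσ ?_
  simp only [hBa _ z hz]
  exact hlamτ.mul (tendsto_prod_blaschkeFactor (hac.comp hτ.tendsto_atTop) hc hz)

end UniformLimit

section DegreeBound

lemma prod_norm_blaschkeFactor_le_pow {m : ℕ} (c : Fin m → ℂ) (hc : ∀ i, ‖c i‖ ≤ 1) {p z : ℂ}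
    (hp : ‖p‖ < 1) (hz : ‖z‖ ≤ 1) :
    ∏ i, ‖blaschkeFactor (c i) z‖ ≤
      (‖z - p‖ / (1 - ‖p‖)) ^ (Finset.univ.filter fun i => c i = p).card := by
  calc ∏ i, ‖blaschkeFactor (c i) z‖
      ≤ ∏ i ∈ Finset.univ.filter fun i => c i = p, ‖blaschkeFactor (c i) z‖ :=
        Finset.prod_le_prod_of_subset_of_le_one (Finset.filter_subset _ _)
          (fun _ _ => norm_nonneg _) fun i _ _ => norm_blaschkeFactor_le_one (hc i) hz
    _ ≤ ∏ _i ∈ Finset.univ.filter fun i => c i = p, ‖z - p‖ / (1 - ‖p‖) :=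
        Finset.prod_le_prod (fun _ _ => norm_nonneg _) fun i hi => by
          rw [(Finset.mem_filter.mp hi).2]
          exact norm_blaschkeFactor_le_div hp hz
    _ = _ := Finset.prod_const _

variable {f : ℂ → ℂ}

lemma card_filter_eq_le_zeroOrder (hf : AnalyticOnNhd ℂ f (ball 0 1))
    (hnc : ¬ ∃ c : ℂ, ∀ z ∈ ball (0 : ℂ) 1, f z = c) {m : ℕ} {c : Fin m → ℂ}
    (hc : ∀ i, c i ∈ ball (0 : ℂ) 1)
    (hbd : ∀ z ∈ ball (0 : ℂ) 1, ‖f z‖ ≤ ∏ i, ‖blaschkeFactor (c i) z‖)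
    {p : ℂ} (hp : p ∈ ball (0 : ℂ) 1) :
    (Finset.univ.filter fun i => c i = p).card ≤ zeroOrder f p := by
  have hf₀ : ¬ ∀ᶠ z in 𝓝 p, f z = 0 := fun h => hnc ⟨0, fun z hz =>
    hf.eqOn_zero_of_preconnected_of_eventuallyEq_zero (convex_ball 0 1).isPreconnected hp h hz⟩
  set k := (Finset.univ.filter fun i => c i = p).card
  refine le_zeroOrder_of_norm_le_mul_pow (hf p hp) hf₀ (C := ((1 - ‖p‖) ^ k)⁻¹) ?_
  filter_upwards [isOpen_ball.mem_nhds hp] with z hz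
  rw [← div_eq_inv_mul, ← div_pow]
  exact (hbd z hz).trans (prod_norm_blaschkeFactor_le_pow c
    (fun i => (mem_ball_zero_iff.mp (hc i)).le) (mem_ball_zero_iff.mp hp)
    (mem_ball_zero_iff.mp hz).le)

lemma card_le_of_hasValence_zero (hf : AnalyticOnNhd ℂ f (ball 0 1))
    (hnc : ¬ ∃ c : ℂ, ∀ z ∈ ball (0 : ℂ) 1, f z = c) {m : ℕ} {c : Fin m → ℂ}
    (hc : ∀ i, c i ∈ ball (0 : ℂ) 1)
    (hbd : ∀ z ∈ ball (0 : ℂ) 1, ‖f z‖ ≤ ∏ i, ‖blaschkeFactor (c i) z‖)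
    {k : ℕ} (hk : HasValence f (ball 0 1) 0 k) : m ≤ k := by
  classical
  obtain ⟨hfin, rfl⟩ := hk
  have hzeros : Finset.univ.image c ⊆ hfin.toFinset := by
    refine Finset.image_subset_iff.mpr fun i _ => (Set.Finite.mem_toFinset _).mpr ⟨hc i, ?_⟩
    exact norm_le_zero_iff.mp ((hbd _ (hc i)).trans_eq (by
      rw [← norm_prod, prod_blaschkeFactor_eq_zero, norm_zero]))
  calc m = ∑ p ∈ Finset.univ.image c, (Finset.univ.filter fun i => c i = p).card := by
        simpa using Finset.card_eq_sum_card_image c Finset.univ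
    _ ≤ ∑ p ∈ Finset.univ.image c, zeroOrder (fun x => f x - 0) p :=
        Finset.sum_le_sum fun p hp => by
          obtain ⟨i, -, rfl⟩ := Finset.mem_image.mp hp
          simpa using card_filter_eq_le_zeroOrder hf hnc hc hbd (hc i)
    _ ≤ _ := Finset.sum_le_sum_of_subset hzeros

lemma eventually_le_of_hasValence_le {B : ℕ → ℂ → ℂ} {d : ℕ → ℕ}
    (hB : ∀ n, IsFiniteBlaschkeDeg (d n) (B n)) (hconv : TendstoUniformlyOn B f atTop (ball 0 1))
    (hnc : ¬ ∃ c : ℂ, ∀ z ∈ ball (0 : ℂ) 1, f z = c) {N : ℕ}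
    (hval : ∀ w ∈ ball (0 : ℂ) 1, ∃ m ≤ N, HasValence f (ball (0 : ℂ) 1) w m) :
    ∀ᶠ n in atTop, d n ≤ N := by
  by_contra h
  obtain ⟨ψ, hψ, hdψ⟩ := extraction_of_frequently_atTop (Filter.not_eventually.mp h)
  choose ζ hζ hBζ using fun n =>
    (hB (ψ n)).exists_norm_le_prod (m := N + 1) (Nat.succ_le_of_lt (not_le.mp (hdψ n)))
  have hzero : ∀ n i, B (ψ n) (ζ n i) = 0 := fun n i => norm_le_zero_iff.mp <|
    (hBζ n _ (hζ n i)).trans_eq (by rw [← norm_prod, prod_blaschkeFactor_eq_zero, norm_zero])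
  have hconvψ := hconv.comp_tendsto hψ.tendsto_atTop
  obtain ⟨σ, c, hσ, hc, hζc⟩ := exists_subseq_tendsto_of_apply_eq_zero (fun n => hB (ψ n))
    hconvψ.uniformCauchySeqOn hζ hzero
  have hbd : ∀ z ∈ ball (0 : ℂ) 1, ‖f z‖ ≤ ∏ i, ‖blaschkeFactor (c i) z‖ := fun z hz => by
    have hlim := (tendsto_prod_blaschkeFactor hζc hc hz).norm
    simp only [norm_prod] at hlim
    exact le_of_tendsto_of_tendsto' ((hconvψ.tendsto_at hz).comp hσ.tendsto_atTop).norm hlim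
      fun k => hBζ (σ k) z hz
  obtain ⟨k, hkN, hk⟩ := hval 0 (mem_ball_self one_pos)
  have := card_le_of_hasValence_zero (analyticOnNhd_of_tendstoUniformlyOn hB hconv) hnc hc hbd hk
  omega

end DegreeBound

theorem stmt_16 (B : ℕ → ℂ → ℂ) (d : ℕ → ℕ)
    (hB : ∀ n, IsFiniteBlaschkeDeg (d n) (B n))
    (f : ℂ → ℂ) (hconv : TendstoUniformlyOn B f atTop (ball (0:ℂ) 1))
    (hnc : ¬ ∃ c : ℂ, ∀ z ∈ ball (0:ℂ) 1, f z = c)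
    (N : ℕ) (hval : ∀ w ∈ ball (0:ℂ) 1, ∃ m ≤ N, HasValence f (ball (0:ℂ) 1) w m) :
    (∃ C : ℕ, ∀ᶠ n in atTop, d n ≤ C) ∧
    ∃ (φ : ℕ → ℕ) (d₀ : ℕ), StrictMono φ ∧ (∀ n, d (φ n) = d₀) ∧
      ∀ w ∈ ball (0:ℂ) 1, HasValence f (ball (0:ℂ) 1) w d₀ := by
  have hbound : ∀ᶠ n in atTop, d n ≤ N := eventually_le_of_hasValence_le hB hconv hnc hval
  have hbounded : ∃ᶠ n in atTop, ∃ j ∈ Set.Iic N, d n = j :=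
    hbound.frequently.mono fun n hn => ⟨d n, hn, rfl⟩
  obtain ⟨d₀, -, hd₀⟩ := (Set.finite_Iic N).frequently_exists.mp hbounded
  obtain ⟨φ, hφ, hdφ⟩ := extraction_of_frequently_atTop hd₀
  have hf : IsFiniteBlaschkeDeg d₀ f := .of_tendstoUniformlyOn (fun n => hdφ n ▸ hB (φ n))
    (hconv.comp_tendsto hφ.tendsto_atTop)
  exact ⟨⟨N, hbound⟩, φ, d₀, hφ, hdφ, fun w hw => hf.hasValence hw⟩
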